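/- For any circle graph G with a circle representation C achieving ψ_r(C) = ψ(G) = k, the representation C contains an independent set in series of size k − 1. -/
import Mathlib


open SimpleGraph

/-- The circle on which chord diagrams live (the unit circle as an additive circle). -/
abbrev Circ : Type := AddCircle (1 : ℝ)

/-- A circle representation of a graph `G`: each vertex `v` gets a chord with
distinct endpoints `p v` and `q v`, all `2|V|` endpoints are distinct, and two
distinct vertices are adjacent iff their chords cross (i.e. exactly one endpoint
of one chord lies strictly inside an arc determined by the other chord). -/
structure CircleRep (V : Type) (G : SimpleGraph V) where
  p : V → Circ
  q : V → Circ
  inj : Function.Injective (Sum.elim p q)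
  adj : ∀ u v : V, G.Adj u v ↔ u ≠ v ∧
    Xor' (sbtw (p v) (p u) (q v)) (sbtw (p v) (q u) (q v))

namespace CircleRep

variable {V : Type} {G : SimpleGraph V} (R : CircleRep V G)

/-- The two open arcs of the chord of `v`: `b = true` is the arc from `p v`
clockwise to `q v`, `b = false` is the other arc. -/
def ArcSet (v : V) (b : Bool) : Set Circ :=
  if b then {x | sbtw (R.p v) x (R.q v)} else {x | sbtw (R.q v) x (R.p v)}

/-- The arc `b` of the chord of `v` is empty: it contains both endpoints of no chord. -/
def ArcEmpty (v : V) (b : Bool) : Prop :=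
  ∀ u : V, ¬ (R.p u ∈ R.ArcSet v b ∧ R.q u ∈ R.ArcSet v b)

/-- A chord is peripheral if one of its arcs is empty. -/
def Peripheral (v : V) : Prop := ∃ b : Bool, R.ArcEmpty v b

/-- A set `T` of corner points satisfies the chord of `v` if each of the two
arcs of the chord contains a corner. -/
def SatChord (T : Finset Circ) (v : V) : Prop :=
  (∃ t ∈ T, t ∈ R.ArcSet v true) ∧ (∃ t ∈ T, t ∈ R.ArcSet v false)

/-- `T` is a satisfying set of corners: the corners are distinct from all chord
endpoints and every chord has a corner in each of its arcs. -/
def GoodCorners (T : Finset Circ) : Prop :=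
  (∀ t ∈ T, ∀ v : V, t ≠ R.p v ∧ t ≠ R.q v) ∧ ∀ v : V, R.SatChord T v

/-- The polygon number `ψ_r` of a circle representation: the minimum number of
corners that must be added to satisfy all chords. -/
noncomputable def polyNum : ℕ :=
  sInf {k | ∃ T : Finset Circ, T.card = k ∧ R.GoodCorners T}

/-- `c 0, …, c (ℓ-1)` is an ℓ-independent set in series: there is a point `x`
on the circle such that a clockwise traversal starting at `x` encounters both
endpoints of `c i` before both endpoints of `c j` whenever `i < j`. -/
def SeriesIndep {ℓ : ℕ} (c : Fin ℓ → V) : Prop :=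
  Function.Injective c ∧ ∃ x : Circ,
    (∀ i : Fin ℓ, x ≠ R.p (c i) ∧ x ≠ R.q (c i)) ∧
    ∀ i j : Fin ℓ, i < j →
      ∀ e ∈ ({R.p (c i), R.q (c i)} : Set Circ),
        ∀ f ∈ ({R.p (c j), R.q (c j)} : Set Circ), sbtw x e f

end CircleRep

/-- The polygon number `ψ(G)`: the minimum `k` such that `G` has a circle
representation together with `k` corners satisfying all chords. -/
noncomputable def polygonNumber {V : Type} (G : SimpleGraph V) : ℕ :=
  sInf {k | ∃ R : CircleRep V G, ∃ T : Finset Circ, T.card = k ∧ R.GoodCorners T}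

/-- A permutation graph: a graph having a circle representation admitting two
corner points such that each chord has one corner in each of its arcs. -/
def IsPermutationGraph {V : Type} (G : SimpleGraph V) : Prop :=
  ∃ R : CircleRep V G, ∃ T : Finset Circ, T.card = 2 ∧ R.GoodCorners T

/-- The clique cover number `κ(G)`: least `n` such that the vertex set can be
partitioned into `n` cliques. -/
noncomputable def cliqueCoverNumber {V : Type} (G : SimpleGraph V) : ℕ :=
  sInf {n | ∃ f : V → Fin n, ∀ u v : V, f u = f v → u = v ∨ G.Adj u v}

/-- The independence number `α(G)`. -/
noncomputable def indepNumber {V : Type} (G : SimpleGraph V) : ℕ :=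
  sSup {n | ∃ s : Finset V, (∀ u ∈ s, ∀ v ∈ s, u ≠ v → ¬ G.Adj u v) ∧ s.card = n}

/-- `A` is an asteroidal set of `G`: for every `a ∈ A`, any two vertices of
`A \ {a}` are connected by a path in `G - N[a]`. -/
def IsAsteroidal {V : Type} (G : SimpleGraph V) (A : Set V) : Prop :=
  ∀ a ∈ A, ∀ x ∈ A, ∀ y ∈ A, x ≠ a → y ≠ a →
    ∃ (hx : x ∈ {w | w ≠ a ∧ ¬ G.Adj a w}) (hy : y ∈ {w | w ≠ a ∧ ¬ G.Adj a w}),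
      (G.induce {w | w ≠ a ∧ ¬ G.Adj a w}).Reachable ⟨x, hx⟩ ⟨y, hy⟩

/-- The asteroidal number `an(G)`: maximum size of an asteroidal set. -/
noncomputable def asteroidalNumber {V : Type} (G : SimpleGraph V) : ℕ :=
  sSup {n | ∃ A : Finset V, IsAsteroidal G ↑A ∧ A.card = n}

/-- `G` is AT-free: it has no asteroidal triple. -/
def ATFree {V : Type} (G : SimpleGraph V) : Prop :=
  ¬ ∃ a b c : V, a ≠ b ∧ a ≠ c ∧ b ≠ c ∧ IsAsteroidal G {a, b, c}

/-- `G` is distance hereditary: in every connected induced subgraph, distances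
agree with those of `G`. -/
def DistanceHereditary {V : Type} (G : SimpleGraph V) : Prop :=
  ∀ s : Set V, (G.induce s).Connected →
    ∀ u v : ↥s, (G.induce s).dist u v = G.dist (u : V) (v : V)

/-- `{V1, V2}` is a split of `G`. -/
def IsSplit {V : Type} (G : SimpleGraph V) (V1 V2 : Set V) : Prop :=
  V1 ∪ V2 = Set.univ ∧ Disjoint V1 V2 ∧ 1 < V1.ncard ∧ 1 < V2.ncard ∧
    ∀ x ∈ V1, ∀ y ∈ V2,
      (G.Adj x y ↔ (∃ y' ∈ V2, G.Adj x y') ∧ (∃ x' ∈ V1, G.Adj x' y))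



section Aux

noncomputable def cd (x z : Circ) : ℝ :=
  ((QuotientAddGroup.equivIcoMod (zero_lt_one : (0:ℝ) < 1) 0 (z - x) : Set.Ico (0:ℝ) (0+1)) : ℝ)

lemma cd_mem (x z : Circ) : cd x z ∈ Set.Ico (0:ℝ) 1 := by
  have := (QuotientAddGroup.equivIcoMod (zero_lt_one : (0:ℝ) < 1) 0 (z - x)).2
  simpa [cd] using this

lemma coe_cd (x z : Circ) : ((cd x z : ℝ) : Circ) = z - x := by
  have := (QuotientAddGroup.equivIcoMod (zero_lt_one : (0:ℝ) < 1) 0).symm_apply_apply (z - x)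
  rw [QuotientAddGroup.equivIcoMod_symm_apply] at this
  exact this

lemma eq_add_cd (x z : Circ) : z = x + ((cd x z : ℝ) : Circ) := by
  rw [coe_cd]; abel

lemma cd_coe (x : Circ) {E : ℝ} (hE : E ∈ Set.Ico (0:ℝ) 1) : cd x (x + (E : Circ)) = E := by
  have h1 : (x + (E : Circ)) - x = (E : Circ) := by abel
  unfold cd
  rw [h1, QuotientAddGroup.equivIcoMod_coe]
  exact (toIcoMod_eq_self _).mpr (by simpa using hE)

lemma cd_inj {x y z : Circ} (h : cd x y = cd x z) : y = z := by
  have h2 := congrArg (fun r : ℝ => (r : Circ)) h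
  simp only [coe_cd] at h2
  exact sub_left_inj.mp h2

lemma cd_self (x : Circ) : cd x x = 0 := by
  have := cd_coe x (E := 0) ⟨le_refl _, zero_lt_one⟩
  simpa using this

lemma cd_pos {x z : Circ} (h : z ≠ x) : 0 < cd x z := by
  rcases lt_or_eq_of_le (cd_mem x z).1 with h1 | h1
  · exact h1
  · exfalso; apply h
    have h2 := coe_cd x z
    rw [← h1] at h2
    simp only [QuotientAddGroup.mk_zero] at h2
    have : z - x = 0 := h2.symm
    have := sub_eq_zero.mp this
    exact this

lemma btw_coords {x a b : ℝ} (ha : a ∈ Set.Ico (0:ℝ) 1) (hb : b ∈ Set.Ioc (0:ℝ) 1) :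
    Btw.btw (x : Circ) ((x + a : ℝ) : Circ) ((x + b : ℝ) : Circ) ↔ a ≤ b := by
  rw [QuotientAddGroup.btw_coe_iff']
  have h1 : x + a - x = a := by ring
  have h2 : x + b - x = b := by ring
  rw [h1, h2, (toIcoMod_eq_self _).mpr (by simpa using ha),
    (toIocMod_eq_self _).mpr (by simpa using hb)]

lemma sbtw_coords {x a b : ℝ} (ha : a ∈ Set.Ioo (0:ℝ) 1) (hb : b ∈ Set.Ioo (0:ℝ) 1) :
    sbtw (x : Circ) ((x + a : ℝ) : Circ) ((x + b : ℝ) : Circ) ↔ a < b := by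
  rw [sbtw_iff_btw_not_btw]
  rw [btw_coords (Set.mem_Ico.mpr ⟨ha.1.le, ha.2⟩) (Set.mem_Ioc.mpr ⟨hb.1, hb.2.le⟩)]
  have key : Btw.btw (((x + b : ℝ)) : Circ) (((x + a : ℝ)) : Circ) ((x : ℝ) : Circ) ↔
      toIcoMod (zero_lt_one : (0:ℝ) < 1) 0 (a - b) ≤ toIocMod (zero_lt_one : (0:ℝ) < 1) 0 (-b) := by
    rw [QuotientAddGroup.btw_coe_iff']
    have e1 : x + a - (x + b) = a - b := by ring
    have e2 : x - (x + b) = -b := by ring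
    rw [e1, e2]
  rw [key]
  have hIoc : toIocMod (zero_lt_one : (0:ℝ) < 1) 0 (-b) = -b + 1 := by
    rw [← toIocMod_add_right]
    exact (toIocMod_eq_self _).mpr ⟨by linarith [hb.2], by rw [zero_add]; linarith [hb.1]⟩
  rw [hIoc]
  rcases lt_trichotomy a b with h | h | h
  · have hIco : toIcoMod (zero_lt_one : (0:ℝ) < 1) 0 (a - b) = a - b + 1 := by
      rw [← toIcoMod_add_right]
      exact (toIcoMod_eq_self _).mpr ⟨by linarith [ha.1, hb.2], by rw [zero_add]; linarith⟩
    rw [hIco]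
    constructor
    · intro _; exact h
    · intro _; exact ⟨h.le, by intro hc; linarith [ha.1]⟩
  · subst h
    have hIco : toIcoMod (zero_lt_one : (0:ℝ) < 1) 0 (a - a) = 0 := by
      simp
    constructor
    · rintro ⟨-, hc⟩; exact absurd (by rw [hIco]; linarith [ha.2] : toIcoMod (zero_lt_one : (0:ℝ) < 1) 0 (a - a) ≤ -a + 1) hc
    · intro hc; exact absurd hc (lt_irrefl a)
  · have hIco : toIcoMod (zero_lt_one : (0:ℝ) < 1) 0 (a - b) = a - b := by
      exact (toIcoMod_eq_self _).mpr ⟨by linarith, by rw [zero_add]; linarith [ha.2, hb.1]⟩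
    constructor
    · rintro ⟨hc, -⟩; linarith
    · intro hc; linarith
lemma sbtw_coords' (x : Circ) {a b : ℝ} (ha : a ∈ Set.Ioo (0:ℝ) 1) (hb : b ∈ Set.Ioo (0:ℝ) 1) :
    sbtw x (x + (a : Circ)) (x + (b : Circ)) ↔ a < b := by
  induction x using QuotientAddGroup.induction_on with
  | H x =>
    have h1 : ((x : Circ)) + (a : Circ) = ((x + a : ℝ) : Circ) := by
      rw [AddCircle.coe_add]
    have h2 : ((x : Circ)) + (b : Circ) = ((x + b : ℝ) : Circ) := by
      rw [AddCircle.coe_add]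
    rw [h1, h2]
    exact sbtw_coords ha hb

lemma sbtw_cd_iff {x e f : Circ} (he : e ≠ x) (hf : f ≠ x) (hef : e ≠ f) :
    sbtw x e f ↔ cd x e < cd x f := by
  have hE : cd x e ∈ Set.Ioo (0:ℝ) 1 := ⟨cd_pos he, (cd_mem x e).2⟩
  have hF : cd x f ∈ Set.Ioo (0:ℝ) 1 := ⟨cd_pos hf, (cd_mem x f).2⟩
  have := sbtw_coords' x hE hF
  rwa [← eq_add_cd x e, ← eq_add_cd x f] at this

noncomputable def fr (Z A : ℝ) : ℝ := if A < Z then Z - A else Z - A + 1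

lemma cd_rebase {x P z : Circ} (hP : P ≠ x) (hz : z ≠ P) :
    cd P z = fr (cd x z) (cd x P) := by
  have hA := cd_mem x P
  have hZ := cd_mem x z
  have hAZ : cd x P ≠ cd x z := fun h => hz (cd_inj h).symm
  unfold fr
  by_cases h : cd x P < cd x z
  · rw [if_pos h]
    have hzz : z = P + ((cd x z - cd x P : ℝ) : Circ) := by
      have he : ((cd x z - cd x P : ℝ) : Circ) = z - P := by
        rw [AddCircle.coe_sub, coe_cd, coe_cd]; abel
      rw [he]; abel
    rw [hzz, cd_coe P ⟨by linarith [hZ.1, hA.2], by linarith [hZ.2, hA.1]⟩]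
    rw [← hzz]
  · rw [if_neg h]
    have hlt : cd x z < cd x P := lt_of_le_of_ne (not_lt.mp h) (fun e => hAZ e.symm)
    have hzz : z = P + ((cd x z - cd x P + 1 : ℝ) : Circ) := by
      have hone : ((1 : ℝ) : Circ) = 0 := AddCircle.coe_period 1
      have : ((cd x z - cd x P + 1 : ℝ) : Circ) = ((cd x z - cd x P : ℝ) : Circ) := by
        rw [AddCircle.coe_add, hone, add_zero]
      rw [this]
      have he : ((cd x z - cd x P : ℝ) : Circ) = z - P := by
        rw [AddCircle.coe_sub, coe_cd, coe_cd]; abel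
      rw [he]; abel
    rw [hzz, cd_coe P ⟨by linarith [hZ.1, hA.2], by linarith [hZ.1, hA.2]⟩]
    rw [← hzz]

lemma sbtw_arc_iff {x P Q z : Circ} (hP : P ≠ x) (hPQ : Q ≠ P) (hzP : z ≠ P) (hzQ : z ≠ Q) :
    sbtw P z Q ↔ fr (cd x z) (cd x P) < fr (cd x Q) (cd x P) := by
  rw [sbtw_cd_iff hzP hPQ hzQ, cd_rebase hP hzP, cd_rebase hP hPQ]

lemma fr_partition {A B Z : ℝ} (hA : A ∈ Set.Ioo (0:ℝ) 1) (hB : B ∈ Set.Ioo (0:ℝ) 1)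
    (hZ : Z ∈ Set.Ico (0:ℝ) 1) (hZA : Z ≠ A) (hZB : Z ≠ B) :
    fr Z A < fr B A ∨ fr Z B < fr A B := by
  obtain ⟨hA0, hA1⟩ := hA; obtain ⟨hB0, hB1⟩ := hB; obtain ⟨hZ0, hZ1⟩ := hZ
  have h1 := lt_or_gt_of_ne hZA
  have h2 := lt_or_gt_of_ne hZB
  unfold fr
  split_ifs <;>
    first
      | (left; rcases h1 with h1 | h1 <;> rcases h2 with h2 | h2 <;> linarith)
      | (right; rcases h1 with h1 | h1 <;> rcases h2 with h2 | h2 <;> linarith)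

lemma fr_not_both {A B U : ℝ} (hA : A ∈ Set.Ioo (0:ℝ) 1) (hB : B ∈ Set.Ioo (0:ℝ) 1)
    (hU : U ∈ Set.Ioo (0:ℝ) 1) (hlo : min A B < U) (hhi : U < max A B) :
    ¬(fr U A < fr B A ∧ fr 0 A < fr B A) := by
  obtain ⟨hA0, hA1⟩ := hA; obtain ⟨hB0, hB1⟩ := hB; obtain ⟨hU0, hU1⟩ := hU
  rcases lt_trichotomy A B with h | h | h
  · rw [min_eq_left h.le] at hlo
    rw [max_eq_right h.le] at hhi
    unfold fr
    rintro ⟨h1, h2⟩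
    split_ifs at h1 h2 <;> linarith
  · subst h; simp at hlo hhi; linarith
  · rw [min_eq_right h.le] at hlo
    rw [max_eq_left h.le] at hhi
    unfold fr
    rintro ⟨h1, h2⟩
    split_ifs at h1 h2 <;> linarith

lemma greedy {V : Type} [DecidableEq V] (l r : V → ℝ) (B : Finset ℝ) (s : Finset V) :
    (∀ v ∈ s, l v < r v) →
    ∃ (m : ℕ) (c : Fin m → V) (P : Finset ℝ),
      (∀ i j : Fin m, i < j → r (c i) ≤ l (c j)) ∧
      (∀ i, c i ∈ s) ∧
      P.card ≤ m ∧
      (∀ u ∈ P, u ∉ B ∧ ∃ v ∈ s, l v < u ∧ u < r v) ∧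
      (∀ v ∈ s, ∃ u ∈ P, l v < u ∧ u < r v) := by
  induction s using Finset.strongInduction with
  | _ s ih =>
    intro hs
    rcases s.eq_empty_or_nonempty with rfl | hne
    · exact ⟨0, Fin.elim0, ∅, fun i => i.elim0, fun i => i.elim0, by simp, by simp, by simp⟩
    obtain ⟨w, hw, hwmin⟩ := Finset.exists_min_image s r hne
    set s' : Finset V := s.filter (fun v => r w ≤ l v) with hs'
    have hsub : s' ⊆ s := Finset.filter_subset _ _
    have hwns : w ∉ s' := by
      simp only [hs', Finset.mem_filter]
      rintro ⟨-, hc⟩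
      exact absurd (hs w hw) (not_lt.mpr hc)
    have hss : s' ⊂ s := (Finset.ssubset_iff_of_subset hsub).mpr ⟨w, hw, hwns⟩
    obtain ⟨m, c, P, hchain, hmem, hcard, havoid, hpierce⟩ :=
      ih s' hss (fun v hv => hs v (hsub hv))
    set sf : Finset V := s.filter (fun v => l v < r w) with hsf
    have hwsf : w ∈ sf := by
      simp only [hsf, Finset.mem_filter]
      exact ⟨hw, hs w hw⟩
    have hne2 : (sf.image l).Nonempty := ⟨l w, Finset.mem_image_of_mem l hwsf⟩
    set L : ℝ := (sf.image l).max' hne2 with hL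
    have hLlt : L < r w := by
      rw [hL]
      apply (Finset.max'_lt_iff _ hne2).mpr
      intro y hy
      obtain ⟨v, hv, rfl⟩ := Finset.mem_image.mp hy
      exact (Finset.mem_filter.mp hv).2
    have hlwL : l w ≤ L := Finset.le_max' _ _ (Finset.mem_image_of_mem l hwsf)
    have hinf : (Set.Ioo L (r w) \ (B : Set ℝ)).Infinite :=
      (Set.Ioo_infinite hLlt).diff (B.finite_toSet)
    obtain ⟨u, hu⟩ := hinf.nonempty
    obtain ⟨⟨huL, hur⟩, huB⟩ := hu
    refine ⟨m + 1, Fin.cons w c, insert u P, ?_, ?_, ?_, ?_, ?_⟩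
    · intro i j hij
      induction j using Fin.cases with
      | zero => exact absurd hij (Fin.not_lt_zero i)
      | succ j' =>
        induction i using Fin.cases with
        | zero =>
          simp only [Fin.cons_zero, Fin.cons_succ]
          exact (Finset.mem_filter.mp (hmem j')).2
        | succ i' =>
          simp only [Fin.cons_succ]
          exact hchain i' j' (Fin.succ_lt_succ_iff.mp hij)
    · intro i
      induction i using Fin.cases with
      | zero => simpa using hw
      | succ i' => simpa using hsub (hmem i')
    · calc (insert u P).card ≤ P.card + 1 := Finset.card_insert_le _ _
        _ ≤ m + 1 := by omega
    · intro u' hu'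
      rcases Finset.mem_insert.mp hu' with rfl | hu'
      · exact ⟨huB, w, hw, lt_of_le_of_lt hlwL huL, hur⟩
      · obtain ⟨h1, v, hv, h2⟩ := havoid u' hu'
        exact ⟨h1, v, hsub hv, h2⟩
    · intro v hv
      by_cases hcase : l v < r w
      · refine ⟨u, Finset.mem_insert_self _ _, ?_, ?_⟩
        · have : l v ≤ L := Finset.le_max' _ _
            (Finset.mem_image_of_mem l (Finset.mem_filter.mpr ⟨hv, hcase⟩))
          linarith
        · exact lt_of_lt_of_le hur (hwmin v hv)
      · have hv' : v ∈ s' := Finset.mem_filter.mpr ⟨hv, not_lt.mp hcase⟩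
        obtain ⟨u', hu', h⟩ := hpierce v hv'
        exact ⟨u', Finset.mem_insert_of_mem hu', h⟩
end Aux

theorem stmt19 {V : Type} [Fintype V] (G : SimpleGraph V) (R : CircleRep V G)
    (k : ℕ) (h1 : R.polyNum = k) (h2 : polygonNumber G = k) :
    ∃ c : Fin (k - 1) → V, R.SeriesIndep c := by
  classical
  clear h2
  by_cases hk1 : k ≤ 1
  · have hz : k - 1 = 0 := by omega
    have hV : ∀ i : Fin (k - 1), False := fun i => absurd i.2 (by omega)
    exact ⟨fun i => (hV i).elim, fun a b _ => ((hV a).elim),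
      0, fun i => (hV i).elim, fun i j _ => (hV i).elim⟩
  push_neg at hk1
  have hdef : R.polyNum = sInf {n | ∃ T : Finset Circ, T.card = n ∧ R.GoodCorners T} := rfl
  have hSne : {n | ∃ T : Finset Circ, T.card = n ∧ R.GoodCorners T}.Nonempty := by
    by_contra h
    rw [Set.not_nonempty_iff_eq_empty] at h
    rw [hdef, h, Nat.sInf_empty] at h1
    omega
  have hkS := Nat.sInf_mem hSne
  rw [← hdef, h1] at hkS
  obtain ⟨T, hTcard, hTgood⟩ := hkS
  have hTne : T.Nonempty := Finset.card_pos.mp (by omega)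
  obtain ⟨x, hxT⟩ := hTne
  have hxp : ∀ v, x ≠ R.p v := fun v => (hTgood.1 x hxT v).1
  have hxq : ∀ v, x ≠ R.q v := fun v => (hTgood.1 x hxT v).2
  have hpx : ∀ v, R.p v ≠ x := fun v => (hxp v).symm
  have hqx : ∀ v, R.q v ≠ x := fun v => (hxq v).symm
  have hp_inj : ∀ {a b : V}, R.p a = R.p b → a = b := by
    intro a b h
    have := R.inj (a₁ := Sum.inl a) (a₂ := Sum.inl b) (by simpa using h)
    simpa using this
  have hq_inj : ∀ {a b : V}, R.q a = R.q b → a = b := by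
    intro a b h
    have := R.inj (a₁ := Sum.inr a) (a₂ := Sum.inr b) (by simpa using h)
    simpa using this
  have hpq_ne : ∀ a b : V, R.p a ≠ R.q b := by
    intro a b h
    have := R.inj (a₁ := Sum.inl a) (a₂ := Sum.inr b) (by simpa using h)
    simp at this
  set A : V → ℝ := fun v => cd x (R.p v) with hAdef
  set Bc : V → ℝ := fun v => cd x (R.q v) with hBdef
  have hAmem : ∀ v, A v ∈ Set.Ioo (0:ℝ) 1 := fun v => ⟨cd_pos (hpx v), (cd_mem _ _).2⟩
  have hBmem : ∀ v, Bc v ∈ Set.Ioo (0:ℝ) 1 := fun v => ⟨cd_pos (hqx v), (cd_mem _ _).2⟩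
  have hpqv : ∀ v, R.p v ≠ R.q v := fun v => hpq_ne v v
  have hqpv : ∀ v, R.q v ≠ R.p v := fun v => (hpqv v).symm
  have hAB : ∀ v, A v ≠ Bc v := fun v h => (hpqv v) (cd_inj h)
  set lo : V → ℝ := fun v => min (A v) (Bc v) with hlodef
  set hi : V → ℝ := fun v => max (A v) (Bc v) with hhidef
  set Bad : Finset ℝ := (Finset.univ.image A) ∪ (Finset.univ.image Bc) with hBaddef
  obtain ⟨m, c, P, hchain, hcmem, hcard, havoid, hpierce⟩ :=
    greedy lo hi Bad Finset.univ (fun v _ => min_lt_max.mpr (hAB v))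
  have hPIoo : ∀ u ∈ P, u ∈ Set.Ioo (0:ℝ) 1 := by
    intro u hu
    obtain ⟨-, v, -, h1u, h2u⟩ := havoid u hu
    exact ⟨lt_trans (lt_min (hAmem v).1 (hBmem v).1) h1u,
      lt_trans h2u (max_lt (hAmem v).2 (hBmem v).2)⟩
  have hPnot : ∀ u ∈ P, ∀ v, u ≠ A v ∧ u ≠ Bc v := by
    intro u hu v
    have hB := (havoid u hu).1
    constructor
    · intro h
      apply hB
      rw [h]
      exact Finset.mem_union_left _ (Finset.mem_image_of_mem A (Finset.mem_univ v))
    · intro h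
      apply hB
      rw [h]
      exact Finset.mem_union_right _ (Finset.mem_image_of_mem Bc (Finset.mem_univ v))
  set T' : Finset Circ := insert x (P.image (fun u => x + ((u:ℝ) : Circ))) with hT'def
  have hcdu : ∀ u ∈ P, cd x (x + ((u:ℝ):Circ)) = u := fun u hu =>
    cd_coe x ⟨(hPIoo u hu).1.le, (hPIoo u hu).2⟩
  have arc_true : ∀ v : V, R.ArcSet v true = {z | sbtw (R.p v) z (R.q v)} := by
    intro v; simp [CircleRep.ArcSet]
  have arc_false : ∀ v : V, R.ArcSet v false = {z | sbtw (R.q v) z (R.p v)} := by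
    intro v; simp [CircleRep.ArcSet]
  have hT'good : R.GoodCorners T' := by
    constructor
    · intro t ht v
      rcases Finset.mem_insert.mp ht with rfl | ht
      · exact hTgood.1 t hxT v
      · obtain ⟨u, hu, rfl⟩ := Finset.mem_image.mp ht
        constructor
        · intro h
          exact (hPnot u hu v).1 (by rw [← hcdu u hu, h])
        · intro h
          exact (hPnot u hu v).2 (by rw [← hcdu u hu, h])
    · intro v
      obtain ⟨u, huP, hu1, hu2⟩ := hpierce v (Finset.mem_univ v)
      have huIoo := hPIoo u huP
      set z : Circ := x + ((u:ℝ) : Circ) with hzdef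
      have hzT' : z ∈ T' := Finset.mem_insert_of_mem (Finset.mem_image_of_mem _ huP)
      have hxT' : x ∈ T' := Finset.mem_insert_self _ _
      have hcz : cd x z = u := hcdu u huP
      have hzp : z ≠ R.p v := fun h => (hPnot u huP v).1 (by rw [← hcz, h])
      have hzq : z ≠ R.q v := fun h => (hPnot u huP v).2 (by rw [← hcz, h])
      have harc1 : ∀ w : Circ, w ≠ R.p v → w ≠ R.q v →
          (sbtw (R.p v) w (R.q v) ↔ fr (cd x w) (A v) < fr (Bc v) (A v)) :=
        fun w hw1 hw2 => sbtw_arc_iff (x := x) (hpx v) (hqpv v) hw1 hw2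
      have harc2 : ∀ w : Circ, w ≠ R.p v → w ≠ R.q v →
          (sbtw (R.q v) w (R.p v) ↔ fr (cd x w) (Bc v) < fr (A v) (Bc v)) :=
        fun w hw1 hw2 => sbtw_arc_iff (x := x) (hqx v) (hpqv v) hw2 hw1
      have hz1 : sbtw (R.p v) z (R.q v) ∨ sbtw (R.q v) z (R.p v) := by
        rcases fr_partition (hAmem v) (hBmem v) ⟨huIoo.1.le, huIoo.2⟩
            (hPnot u huP v).1 (hPnot u huP v).2 with h | h
        · exact Or.inl ((harc1 z hzp hzq).mpr (by rw [hcz]; exact h))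
        · exact Or.inr ((harc2 z hzp hzq).mpr (by rw [hcz]; exact h))
      have hx1 : sbtw (R.p v) x (R.q v) ∨ sbtw (R.q v) x (R.p v) := by
        rcases fr_partition (hAmem v) (hBmem v) ⟨le_refl 0, zero_lt_one⟩
            (hAmem v).1.ne (hBmem v).1.ne with h | h
        · exact Or.inl ((harc1 x (hxp v) (hxq v)).mpr (by rw [cd_self]; exact h))
        · exact Or.inr ((harc2 x (hxp v) (hxq v)).mpr (by rw [cd_self]; exact h))
      have hnb1 : ¬(sbtw (R.p v) z (R.q v) ∧ sbtw (R.p v) x (R.q v)) := by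
        rintro ⟨hh1, hh2⟩
        have hr1 := (harc1 z hzp hzq).mp hh1
        have hr2 := (harc1 x (hxp v) (hxq v)).mp hh2
        rw [hcz] at hr1
        rw [cd_self] at hr2
        exact fr_not_both (hAmem v) (hBmem v) huIoo hu1 hu2 ⟨hr1, hr2⟩
      have hnb2 : ¬(sbtw (R.q v) z (R.p v) ∧ sbtw (R.q v) x (R.p v)) := by
        rintro ⟨hh1, hh2⟩
        have hr1 := (harc2 z hzp hzq).mp hh1
        have hr2 := (harc2 x (hxp v) (hxq v)).mp hh2
        rw [hcz] at hr1
        rw [cd_self] at hr2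
        exact fr_not_both (hBmem v) (hAmem v) huIoo (by rwa [min_comm])
          (by rwa [max_comm]) ⟨hr1, hr2⟩
      constructor
      · rcases hz1 with h | h
        · exact ⟨z, hzT', by rw [arc_true v]; exact h⟩
        · rcases hx1 with h' | h'
          · exact ⟨x, hxT', by rw [arc_true v]; exact h'⟩
          · exact absurd ⟨h, h'⟩ hnb2
      · rcases hz1 with h | h
        · rcases hx1 with h' | h'
          · exact absurd ⟨h, h'⟩ hnb1
          · exact ⟨x, hxT', by rw [arc_false v]; exact h'⟩
        · exact ⟨z, hzT', by rw [arc_false v]; exact h⟩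
  have hk_le : k ≤ m + 1 := by
    have hmemS : T'.card ∈ {n | ∃ T : Finset Circ, T.card = n ∧ R.GoodCorners T} :=
      ⟨T', rfl, hT'good⟩
    have hle := Nat.sInf_le hmemS
    rw [← hdef, h1] at hle
    have h2' : T'.card ≤ (P.image (fun u => x + ((u:ℝ) : Circ))).card + 1 :=
      Finset.card_insert_le _ _
    have h3' : (P.image (fun u => x + ((u:ℝ) : Circ))).card ≤ P.card :=
      Finset.card_image_le
    omega
  have hkm : k - 1 ≤ m := by omega
  set c0 : Fin (k - 1) → V := fun i => c ⟨i.1, lt_of_lt_of_le i.2 hkm⟩ with hc0def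
  have hchain0 : ∀ i j : Fin (k - 1), i < j → hi (c0 i) ≤ lo (c0 j) := by
    intro i j hij
    exact hchain _ _ (Fin.mk_lt_mk.mpr hij)
  have hne0 : ∀ i j : Fin (k - 1), i < j → c0 i ≠ c0 j := by
    intro i j hij h
    have ha := hchain0 i j hij
    have hb : lo (c0 j) < hi (c0 j) := min_lt_max.mpr (hAB _)
    rw [h] at ha
    linarith
  refine ⟨c0, ?_, x, fun i => ⟨hxp _, hxq _⟩, ?_⟩
  · intro i j h
    by_contra hne
    rcases Ne.lt_or_gt hne with hij | hij
    · exact hne0 i j hij h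
    · exact hne0 j i hij h.symm
  · intro i j hij e he f hf
    simp only [Set.mem_insert_iff, Set.mem_singleton_iff] at he hf
    have hvij := hne0 i j hij
    have hex : e ≠ x := by rcases he with rfl | rfl; exacts [hpx _, hqx _]
    have hfx : f ≠ x := by rcases hf with rfl | rfl; exacts [hpx _, hqx _]
    have hecd : cd x e ≤ hi (c0 i) := by
      rcases he with rfl | rfl; exacts [le_max_left _ _, le_max_right _ _]
    have hfcd : lo (c0 j) ≤ cd x f := by
      rcases hf with rfl | rfl; exacts [min_le_left _ _, min_le_right _ _]
    have hef : e ≠ f := by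
      rcases he with rfl | rfl <;> rcases hf with rfl | rfl
      · exact fun h => hvij (hp_inj h)
      · exact hpq_ne _ _
      · exact fun h => hpq_ne _ _ h.symm
      · exact fun h => hvij (hq_inj h)
    have hlt : cd x e < cd x f :=
      lt_of_le_of_ne (hecd.trans ((hchain0 i j hij).trans hfcd)) (fun h => hef (cd_inj h))
    exact (sbtw_cd_iff hex hfx hef).mpr hlt
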